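/- Let d and ρ be selfadjoint idempotent metrics on the double of X (i.e., d* = d, ρ* = ρ, [d∘d] = [d], [ρ∘ρ] = [ρ]). Then ρ is quasi-isometric to d if and only if the functions x ↦ ρ(x,x') and x ↦ d(x,x') are equivalent, i.e., there exist α ≥ 0, β ≥ 1 with -α + (1/β) d(x,x') ≤ ρ(x,x') ≤ α + β d(x,x') for all x ∈ X. -/

import Mathlib

open Metric

/-- A cross-metric between metric spaces `X` and `Y`: the cross-distance part
`k x y = d(x, y)` of a metric on `X ⊔ Y` extending the given metrics, with the
distance between the two pieces bounded below away from zero. -/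
structure CrossMetric (X Y : Type*) [MetricSpace X] [MetricSpace Y] where
  k : X → Y → ℝ
  sep : ∃ ε > 0, ∀ x y, ε ≤ k x y
  tri_left : ∀ x x' y, k x y ≤ dist x x' + k x' y
  tri_right : ∀ x y y', k x y ≤ k x y' + dist y' y
  cross_left : ∀ x x' y, dist x x' ≤ k x y + k x' y
  cross_right : ∀ x y y', dist y y' ≤ k x y + k x y'

/-- Composition of cross-metrics: `(ρ ∘ d)(x,z) = inf_y [d(x,y) + ρ(y,z)]`. -/
noncomputable def compFun {X Y Z : Type*} (ρ : Y → Z → ℝ) (d : X → Y → ℝ) : X → Z → ℝ :=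
  fun x z => ⨅ y, (d x y + ρ y z)

/-- The adjoint cross-metric: `d*(y,x) = d(x,y)`. -/
def adjFun {X Y : Type*} (d : X → Y → ℝ) : Y → X → ℝ := fun y x => d x y

/-- Quasi-isometry of two cross-distance functions. -/
def QI {X Y : Type*} (d1 d2 : X → Y → ℝ) : Prop :=
  ∃ α > 0, ∃ β ≥ (1:ℝ), ∀ x y,
    -α + (1/β) * d1 x y ≤ d2 x y ∧ d2 x y ≤ α + β * d1 x y


/-!
Idempotency and symmetry give `d(x,x) ≤ a + b [d∘d](x,x) ≤ a + b (d(x,y) + d(y,x)) = a + 2b d(x,y)`,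
so the diagonal value, and with it `dist x y ≤ d(x,y) + d(y,y)`, is affinely bounded by `d(x,y)`. Since
`d(x,y) ≤ d(x,x) + dist x y`, an affine bound of the diagonal of `d` by that of `ρ` propagates to an
affine bound of `d` by `ρ` everywhere; the converse is restriction to the diagonal.
-/

open Function

section Coarse

variable {ι κ : Type*}

def CoarselyLE (f g : ι → ℝ) : Prop :=
  ∃ a, ∃ b ≥ (0 : ℝ), ∀ i, f i ≤ a + b * g i

def CoarselyEquiv (f g : ι → ℝ) : Prop :=
  ∃ α ≥ (0 : ℝ), ∃ β ≥ (1 : ℝ), ∀ i, -α + (1 / β) * f i ≤ g i ∧ g i ≤ α + β * f i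

namespace CoarselyLE

variable {f f₁ f₂ g h : ι → ℝ}

theorem of_le (hfg : ∀ i, f i ≤ g i) : CoarselyLE f g :=
  ⟨0, 1, zero_le_one, fun i => by simpa using hfg i⟩

theorem refl (f : ι → ℝ) : CoarselyLE f f :=
  of_le fun _ => le_rfl

theorem trans (hfg : CoarselyLE f g) (hgh : CoarselyLE g h) : CoarselyLE f h := by
  obtain ⟨a, b, hb, hfg⟩ := hfg
  obtain ⟨a', b', hb', hgh⟩ := hgh
  refine ⟨a + b * a', b * b', mul_nonneg hb hb', fun i => ?_⟩
  calc f i ≤ a + b * g i := hfg i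
    _ ≤ a + b * (a' + b' * h i) := by gcongr; exact hgh i
    _ = a + b * a' + b * b' * h i := by ring

theorem add (h₁ : CoarselyLE f₁ g) (h₂ : CoarselyLE f₂ g) : CoarselyLE (f₁ + f₂) g := by
  obtain ⟨a₁, b₁, hb₁, h₁⟩ := h₁
  obtain ⟨a₂, b₂, hb₂, h₂⟩ := h₂
  refine ⟨a₁ + a₂, b₁ + b₂, add_nonneg hb₁ hb₂, fun i => ?_⟩
  show f₁ i + f₂ i ≤ _
  linarith [h₁ i, h₂ i]

theorem comp (hfg : CoarselyLE f g) (φ : κ → ι) : CoarselyLE (f ∘ φ) (g ∘ φ) := by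
  obtain ⟨a, b, hb, hfg⟩ := hfg
  exact ⟨a, b, hb, fun k => hfg (φ k)⟩

end CoarselyLE

namespace CoarselyEquiv

variable {f g : ι → ℝ}

theorem le (h : CoarselyEquiv f g) : CoarselyLE f g := by
  obtain ⟨α, hα, β, hβ, h⟩ := h
  refine ⟨β * α, β, by linarith, fun i => ?_⟩
  have hfi : (1 / β) * f i ≤ α + g i := by linarith [(h i).1]
  calc f i = β * ((1 / β) * f i) := by field_simp
    _ ≤ β * (α + g i) := by gcongr
    _ = β * α + β * g i := by ring

theorem ge (h : CoarselyEquiv f g) : CoarselyLE g f := by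
  obtain ⟨α, hα, β, hβ, h⟩ := h
  exact ⟨α, β, by linarith, fun i => (h i).2⟩

theorem of_coarselyLE (hf : ∀ i, 0 ≤ f i) (hg : ∀ i, 0 ≤ g i) (hfg : CoarselyLE f g)
    (hgf : CoarselyLE g f) : CoarselyEquiv f g := by
  obtain ⟨a, b, hb, hfg⟩ := hfg
  obtain ⟨a', b', hb', hgf⟩ := hgf
  refine ⟨|a| + |a'|, by positivity, b + b' + 1, by linarith, fun i => ⟨?_, ?_⟩⟩
  · have hfi : f i ≤ (|a| + |a'|) + (b + b' + 1) * g i := by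
      nlinarith [hfg i, le_abs_self a, abs_nonneg a', hg i]
    rw [one_div, neg_add_le_iff_le_add, inv_mul_le_iff₀ (by linarith)]
    nlinarith [abs_nonneg a, abs_nonneg a']
  · nlinarith [hgf i, le_abs_self a', abs_nonneg a, hf i]

end CoarselyEquiv

theorem coarselyEquiv_iff {f g : ι → ℝ} (hf : ∀ i, 0 ≤ f i) (hg : ∀ i, 0 ≤ g i) :
    CoarselyEquiv f g ↔ CoarselyLE f g ∧ CoarselyLE g f :=
  ⟨fun h => ⟨h.le, h.ge⟩, fun h => .of_coarselyLE hf hg h.1 h.2⟩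

end Coarse

theorem qi_iff_coarselyEquiv {X Y : Type*} {d₁ d₂ : X → Y → ℝ} :
    QI d₁ d₂ ↔ CoarselyEquiv (uncurry d₁) (uncurry d₂) := by
  constructor
  · rintro ⟨α, hα, β, hβ, h⟩
    exact ⟨α, hα.le, β, hβ, fun p => h p.1 p.2⟩
  · rintro ⟨α, hα, β, hβ, h⟩
    refine ⟨α + 1, by linarith, β, hβ, fun x y => ?_⟩
    obtain ⟨hlow, hup⟩ := h (x, y)
    exact ⟨by simp only [uncurry_apply_pair] at hlow; linarith,
      by simp only [uncurry_apply_pair] at hup; linarith⟩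

theorem compFun_le {X Y Z : Type*} {ρ : Y → Z → ℝ} {d : X → Y → ℝ} (hd : ∀ x y, 0 ≤ d x y)
    (hρ : ∀ y z, 0 ≤ ρ y z) (x : X) (y : Y) (z : Z) : compFun ρ d x z ≤ d x y + ρ y z :=
  ciInf_le ⟨0, by rintro _ ⟨y', rfl⟩; exact add_nonneg (hd x y') (hρ y' z)⟩ y

namespace CrossMetric

theorem k_pos {X Y : Type*} [MetricSpace X] [MetricSpace Y] (d : CrossMetric X Y) (x : X) (y : Y) :
    0 < d.k x y := by
  obtain ⟨ε, hε, hsep⟩ := d.sep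
  exact hε.trans_le (hsep x y)

variable {X : Type*} [MetricSpace X] (d : CrossMetric X X)
  (hsymm : ∀ x y, d.k x y = d.k y x)
  (hidem : CoarselyLE (uncurry d.k) (uncurry (compFun d.k d.k)))
include hsymm hidem

theorem diag_coarselyLE : CoarselyLE (fun p : X × X => d.k p.1 p.1) (uncurry d.k) := by
  obtain ⟨a, b, hb, h⟩ := hidem
  have hk := fun x y => (d.k_pos x y).le
  refine ⟨a, 2 * b, by positivity, fun ⟨x, y⟩ => ?_⟩
  calc d.k x x ≤ a + b * compFun d.k d.k x x := h (x, x)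
    _ ≤ a + b * (d.k x y + d.k y x) := by gcongr; exact compFun_le hk hk x y x
    _ = a + 2 * b * d.k x y := by rw [← hsymm x y]; ring

theorem dist_coarselyLE : CoarselyLE (fun p : X × X => dist p.1 p.2) (uncurry d.k) := by
  have hswap : uncurry d.k ∘ Prod.swap = uncurry d.k := funext fun p => hsymm p.2 p.1
  have hdiag := (d.diag_coarselyLE hsymm hidem).comp Prod.swap
  rw [hswap] at hdiag
  exact (CoarselyLE.of_le fun p : X × X => d.cross_left p.1 p.2 p.2).trans
    ((CoarselyLE.refl _).add hdiag)

omit hsymm hidem in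
theorem coarselyLE_of_diag (ρ : CrossMetric X X) (hρsymm : ∀ x y, ρ.k x y = ρ.k y x)
    (hρidem : CoarselyLE (uncurry ρ.k) (uncurry (compFun ρ.k ρ.k)))
    (h : CoarselyLE (fun x => d.k x x) (fun x => ρ.k x x)) :
    CoarselyLE (uncurry d.k) (uncurry ρ.k) :=
  (CoarselyLE.of_le fun p : X × X => d.tri_right p.1 p.2 p.1).trans <|
    ((h.comp Prod.fst).trans (ρ.diag_coarselyLE hρsymm hρidem)).add
      (ρ.dist_coarselyLE hρsymm hρidem)

end CrossMetric

theorem statement6_general {X : Type*} [MetricSpace X] (d ρ : CrossMetric X X)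
    (hd : ∀ x y, d.k x y = d.k y x) (hρ : ∀ x y, ρ.k x y = ρ.k y x)
    (hd2 : QI (compFun d.k d.k) d.k) (hρ2 : QI (compFun ρ.k ρ.k) ρ.k) :
    QI ρ.k d.k ↔
      ∃ α ≥ (0:ℝ), ∃ β ≥ (1:ℝ), ∀ x,
        -α + (1/β) * d.k x x ≤ ρ.k x x ∧ ρ.k x x ≤ α + β * d.k x x := by
  have hd0 : ∀ p : X × X, 0 ≤ uncurry d.k p := fun p => (d.k_pos p.1 p.2).le
  have hρ0 : ∀ p : X × X, 0 ≤ uncurry ρ.k p := fun p => (ρ.k_pos p.1 p.2).le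
  have hdidem := (qi_iff_coarselyEquiv.1 hd2).ge
  have hρidem := (qi_iff_coarselyEquiv.1 hρ2).ge
  change _ ↔ CoarselyEquiv (fun x => d.k x x) (fun x => ρ.k x x)
  rw [qi_iff_coarselyEquiv, coarselyEquiv_iff hρ0 hd0,
    coarselyEquiv_iff (fun x => (d.k_pos x x).le) (fun x => (ρ.k_pos x x).le)]
  constructor
  · rintro ⟨hρd, hdρ⟩
    exact ⟨hdρ.comp fun x => (x, x), hρd.comp fun x => (x, x)⟩
  · rintro ⟨hdρ, hρd⟩
    exact ⟨ρ.coarselyLE_of_diag d hd hdidem hρd, d.coarselyLE_of_diag ρ hρ hρidem hdρ⟩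

/-- two selfadjoint idempotent metrics on the double of `X` are
quasi-isometric iff the functions `x ↦ ρ(x,x')` and `x ↦ d(x,x')` are equivalent. -/
theorem statement6 {X : Type*} [MetricSpace X] [Nonempty X] (d ρ : CrossMetric X X)
    (hd : ∀ x y, d.k x y = d.k y x) (hρ : ∀ x y, ρ.k x y = ρ.k y x)
    (hd2 : QI (compFun d.k d.k) d.k) (hρ2 : QI (compFun ρ.k ρ.k) ρ.k) :
    QI ρ.k d.k ↔
      ∃ α ≥ (0:ℝ), ∃ β ≥ (1:ℝ), ∀ x,
        -α + (1/β) * d.k x x ≤ ρ.k x x ∧ ρ.k x x ≤ α + β * d.k x x :=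
  statement6_general d ρ hd hρ hd2 hρ2
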